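/- Let G be a compactly generated t.d.l.c. group, let U be a compact open subgroup of G and let A be a compact symmetric subset of G such that G is generated by U together with A. Then there is a finite symmetric subset B of G such that BU = UB = UBU = UAU. Moreover, for any such subset B, one has G = ⟨B⟩U, and the graph Γ with vertex set the coset space G/U in which gU is adjacent to hU if and only if gU ≠ hU and Uh^{-1}gU ⊆ UBU is a Cayley–Abels graph for G with respect to the natural left action of G. -/

import Mathlib

open scoped Pointwise

section Prelim

variable (G : Type*) [Group G] [TopologicalSpace G]

/-- A topological group is compactly generated if it is generated by a compact subset. -/
def CompactlyGeneratedGrp : Prop := ∃ S : Set G, IsCompact S ∧ Subgroup.closure S = ⊤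

/-- G has no nontrivial compact normal subgroup. -/
def NoCompactNormal : Prop :=
  ∀ N : Subgroup G, N.Normal → IsCompact (N : Set G) → N = ⊥

variable {G}

/-- (K,U) is a TMS pair of G. -/
def IsTMSPair (K U : Subgroup G) : Prop :=
  IsCompact (U : Set G) ∧ IsOpen (U : Set G) ∧
  (∀ N : Subgroup G, N.Normal → IsCompact (N : Set G) → ∀ h : G,
    IsCompact (closure {g : G | (∀ k ∈ K, g * k * g⁻¹ ∈ (U : Set G) * (N : Set G)) ∧
      ¬ ∀ k ∈ K, g * k * g⁻¹ ∈ (fun x => h * x * h⁻¹) '' (U : Set G)})) ∧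
  (¬ IsCompact (closure {g : G | ∀ k ∈ K, g * k * g⁻¹ ∈ (U : Set G)})) ∧
  (∀ N : Subgroup G, N.Normal → IsCompact (N : Set G) → N.relIndex K = 0)

/-- K is a TMS subgroup of G. -/
def IsTMSSubgroup (K : Subgroup G) : Prop := ∃ U : Subgroup G, IsTMSPair K U

/-- g belongs to the quasi-centre of G, i.e. has open centraliser. -/
def InQuasiCentre (g : G) : Prop :=
  IsOpen ((Subgroup.centralizer {g} : Subgroup G) : Set G)

/-- A subgroup is locally normal if its normaliser is open. -/
def IsLocallyNormal (H : Subgroup G) : Prop := IsOpen ((Subgroup.normalizer (H : Set G) : Subgroup G) : Set G)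

variable (G)

/-- G is [A]-semisimple: trivial quasi-centre and no nontrivial abelian locally normal
subgroup. -/
def ASemisimple : Prop :=
  (∀ g : G, InQuasiCentre g → g = 1) ∧
  (∀ H : Subgroup G, IsLocallyNormal H → (∀ a ∈ H, ∀ b ∈ H, a * b = b * a) → H = ⊥)

variable {G}

/-- A compact open subgroup U is of finite quotient type if for each n ≥ 1 it has only
finitely many open normal subgroups of index n. -/
def FiniteQuotientType (U : Subgroup G) : Prop :=
  ∀ n : ℕ, 0 < n →
    {N : Subgroup G | N ≤ U ∧ IsOpen (N : Set G) ∧ (∀ u ∈ U, ∀ x ∈ N, u * x * u⁻¹ ∈ N) ∧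
      N.relIndex U = n}.Finite

variable (G)

/-- G is locally of finite quotient type. -/
def LocallyFiniteQuotientType : Prop :=
  ∀ U : Subgroup G, IsCompact (U : Set G) → IsOpen (U : Set G) → FiniteQuotientType U

variable {G}

/-- K is a local direct factor of G: a closed subgroup such that some open subgroup of G
splits as a topological direct product K × L. -/
def LocalDirectFactor (K : Subgroup G) : Prop :=
  IsClosed (K : Set G) ∧
  ∃ L O : Subgroup G, IsClosed (L : Set G) ∧ IsOpen (O : Set G) ∧ K ≤ O ∧ L ≤ O ∧
    K ⊓ L = ⊥ ∧ (∀ k ∈ K, ∀ l ∈ L, k * l = l * k) ∧ (K : Set G) * (L : Set G) = (O : Set G)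

end Prelim
section Graphs

open Set

variable {V : Type*} {T : SimpleGraph V}

/-- A subset of the vertices of a graph is bounded if it has finite diameter. -/
def BddSet (T : SimpleGraph V) (A : Set V) : Prop :=
  ∃ n : ℕ, ∀ w ∈ A, ∀ w' ∈ A, T.dist w w' ≤ n

/-- The set of points outside A at distance at most d from A. -/
def sepSet (T : SimpleGraph V) (A : Set V) (d : ℕ) : Set V :=
  {p | p ∉ A ∧ ∃ q ∈ A, T.dist p q ≤ d}

/-- A is almost separated if δ_d A is bounded for every d. -/
def AlmostSep (T : SimpleGraph V) (A : Set V) : Prop := ∀ d : ℕ, BddSet T (sepSet T A d)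

/-- An end of a graph: an ultrafilter on the Boolean algebra of almost separated sets
vanishing on the ideal of bounded sets, encoded by the collection of almost separated
sets it contains. -/
structure GraphEnd {V : Type*} (T : SimpleGraph V) where
  sets : Set (Set V)
  almostSep' : ∀ A ∈ sets, AlmostSep T A
  not_bdd' : ∀ A ∈ sets, ¬ BddSet T A
  inter_mem' : ∀ A ∈ sets, ∀ B ∈ sets, A ∩ B ∈ sets
  mono' : ∀ A ∈ sets, ∀ B : Set V, AlmostSep T B → BddSet T (A \ B) → B ∈ sets
  total' : ∀ A : Set V, AlmostSep T A → A ∈ sets ∨ Aᶜ ∈ sets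

/-- The Stone topology on the space of ends of a graph. -/
instance : TopologicalSpace (GraphEnd T) :=
  TopologicalSpace.generateFrom {S | ∃ A : Set V, S = {ξ : GraphEnd T | A ∈ ξ.sets}}

section MapLemmas

variable {e : V ≃ V}

lemma bddSet_image (hd : ∀ u v, T.dist (e u) (e v) = T.dist u v)
    {A : Set V} (h : BddSet T A) : BddSet T (e '' A) := by
  obtain ⟨n, hn⟩ := h
  refine ⟨n, ?_⟩
  rintro w ⟨a, ha, rfl⟩ w' ⟨b, hb, rfl⟩
  rw [hd]; exact hn a ha b hb

lemma dist_symm_eq (hd : ∀ u v, T.dist (e u) (e v) = T.dist u v) :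
    ∀ u v, T.dist (e.symm u) (e.symm v) = T.dist u v := by
  intro u v
  rw [← hd (e.symm u) (e.symm v), Equiv.apply_symm_apply, Equiv.apply_symm_apply]

lemma sepSet_image (hd : ∀ u v, T.dist (e u) (e v) = T.dist u v) (A : Set V) (d : ℕ) :
    sepSet T (e '' A) d = e '' sepSet T A d := by
  ext p
  constructor
  · rintro ⟨hp, q, ⟨a, ha, rfl⟩, hq⟩
    refine ⟨e.symm p, ⟨fun hmem => hp ⟨e.symm p, hmem, e.apply_symm_apply p⟩, a, ha, ?_⟩,
      e.apply_symm_apply p⟩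
    rw [← hd (e.symm p) a, e.apply_symm_apply]
    exact hq
  · rintro ⟨p, ⟨hp, q, hq, hpq⟩, rfl⟩
    refine ⟨fun hmem => ?_, ⟨e q, ⟨q, hq, rfl⟩, by rw [hd]; exact hpq⟩⟩
    obtain ⟨a, ha, hae⟩ := hmem
    exact hp (by rwa [← e.injective hae])

lemma almostSep_image (hd : ∀ u v, T.dist (e u) (e v) = T.dist u v)
    {A : Set V} (h : AlmostSep T A) : AlmostSep T (e '' A) := by
  intro d
  rw [sepSet_image hd]
  exact bddSet_image hd (h d)

/-- The image of an end under a distance-preserving bijection of a graph. -/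
def GraphEnd.mapEquiv (e : V ≃ V) (hd : ∀ u v, T.dist (e u) (e v) = T.dist u v)
    (ξ : GraphEnd T) : GraphEnd T where
  sets := (Set.image e) '' ξ.sets
  almostSep' := by
    rintro A ⟨B, hB, rfl⟩
    exact almostSep_image hd (ξ.almostSep' B hB)
  not_bdd' := by
    rintro A ⟨B, hB, rfl⟩ hbdd
    refine ξ.not_bdd' B hB ?_
    have h2 := bddSet_image (e := e.symm) (dist_symm_eq hd) hbdd
    rwa [Equiv.symm_image_image] at h2
  inter_mem' := by
    rintro A ⟨B1, h1, rfl⟩ A' ⟨B2, h2, rfl⟩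
    exact ⟨B1 ∩ B2, ξ.inter_mem' B1 h1 B2 h2, Set.image_inter e.injective⟩
  mono' := by
    rintro A ⟨B, hB, rfl⟩ C hC hbdd
    refine ⟨e.symm '' C, ?_, by rw [Equiv.image_symm_image]⟩
    refine ξ.mono' B hB _ (almostSep_image (dist_symm_eq hd) hC) ?_
    have heq : B \ e.symm '' C = e.symm '' (e '' B \ C) := by
      rw [Set.image_diff e.symm.injective, Equiv.symm_image_image]
    rw [heq]
    exact bddSet_image (dist_symm_eq hd) hbdd
  total' := by
    intro A hA
    rcases ξ.total' (e.symm '' A) (almostSep_image (dist_symm_eq hd) hA) with h | h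
    · exact Or.inl ⟨e.symm '' A, h, by rw [Equiv.image_symm_image]⟩
    · refine Or.inr ⟨(e.symm '' A)ᶜ, h, ?_⟩
      rw [← Set.image_compl_eq e.symm.bijective, Equiv.image_symm_image]

end MapLemmas

section Actions

variable {G : Type*} [Group G]

/-- An action of a group on a graph by automorphisms, given by a homomorphism to the
permutations of the vertices preserving adjacency. -/
def GraphAction (T : SimpleGraph V) (φ : G →* Equiv.Perm V) : Prop :=
  ∀ (g : G) (u v : V), T.Adj u v → T.Adj (φ g u) (φ g v)

variable {φ : G →* Equiv.Perm V}

lemma GraphAction.adj_iff (hφ : GraphAction T φ) (g : G) {u v : V} :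
    T.Adj (φ g u) (φ g v) ↔ T.Adj u v := by
  refine ⟨fun h => ?_, hφ g u v⟩
  have h2 := hφ g⁻¹ _ _ h
  rwa [map_inv, ← Equiv.Perm.mul_apply, ← Equiv.Perm.mul_apply, inv_mul_cancel,
    Equiv.Perm.one_apply, Equiv.Perm.one_apply] at h2

/-- The graph isomorphism induced by a group element. -/
def GraphAction.iso (hφ : GraphAction T φ) (g : G) : T ≃g T :=
  { toEquiv := φ g, map_rel_iff' := fun {_ _} => hφ.adj_iff g }

lemma iso_dist_le (f : T ≃g T) (u v : V) : T.dist (f u) (f v) ≤ T.dist u v := by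
  by_cases h : T.Reachable u v
  · obtain ⟨p, hp⟩ := h.exists_walk_length_eq_dist
    calc T.dist (f u) (f v) ≤ (p.map f.toHom).length := SimpleGraph.dist_le _
    _ = p.length := by simp
    _ = T.dist u v := hp
  · rw [SimpleGraph.dist_eq_zero_of_not_reachable h,
      SimpleGraph.dist_eq_zero_of_not_reachable (fun hr => h (SimpleGraph.Iso.reachable_iff.mp hr))]

lemma GraphAction.dist_eq (hφ : GraphAction T φ) (g : G) (u v : V) :
    T.dist (φ g u) (φ g v) = T.dist u v := by
  refine le_antisymm (iso_dist_le (hφ.iso g) u v) ?_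
  have h2 := iso_dist_le (hφ.iso g⁻¹) (φ g u) (φ g v)
  have he : ∀ w, (hφ.iso g⁻¹) (φ g w) = w := by
    intro w
    show φ g⁻¹ (φ g w) = w
    rw [map_inv, ← Equiv.Perm.mul_apply, inv_mul_cancel, Equiv.Perm.one_apply]
  rwa [he u, he v] at h2

/-- The action of a group element on the space of ends of a graph. -/
def endAct (φ : G →* Equiv.Perm V) (hφ : GraphAction T φ) (g : G) (ξ : GraphEnd T) :
    GraphEnd T :=
  GraphEnd.mapEquiv (φ g) (hφ.dist_eq g) ξ

/-- The set of elements acting trivially on the space of ends. -/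
def endKernel (φ : G →* Equiv.Perm V) (hφ : GraphAction T φ) : Set G :=
  {g : G | ∀ ξ : GraphEnd T, endAct φ hφ g ξ = ξ}

/-- The rigid stabiliser of a subset of the space of ends: the pointwise fixator of its
complement. -/
def ristEnds (φ : G →* Equiv.Perm V) (hφ : GraphAction T φ) (Y : Set (GraphEnd T)) : Set G :=
  {g : G | ∀ ξ : GraphEnd T, ξ ∉ Y → endAct φ hφ g ξ = ξ}

/-- The action on the space of ends is faithful. -/
def FaithfulOnEnds (φ : G →* Equiv.Perm V) (hφ : GraphAction T φ) : Prop :=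
  ∀ g : G, (∀ ξ : GraphEnd T, endAct φ hφ g ξ = ξ) → g = 1

/-- The action on the space of ends is nondiscretely micro-supported: the rigid stabiliser
of every nonempty open set acts nontrivially, and the kernel of its action is not open
in it. -/
def NondiscMicroSupportedOnEnds [TopologicalSpace G] (φ : G →* Equiv.Perm V)
    (hφ : GraphAction T φ) : Prop :=
  ∀ Y : Set (GraphEnd T), IsOpen Y → Y.Nonempty →
    (∃ g ∈ ristEnds φ hφ Y, ∃ ξ : GraphEnd T, endAct φ hφ g ξ ≠ ξ) ∧
    ¬ ∃ W : Set G, IsOpen W ∧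
        endKernel φ hφ ∩ ristEnds φ hφ Y = W ∩ ristEnds φ hφ Y

/-- The action on the space of ends is extremely proximal: every compact proper subspace
is compressible. -/
def ExtremelyProximalOnEnds (φ : G →* Equiv.Perm V) (hφ : GraphAction T φ) : Prop :=
  ∀ Y : Set (GraphEnd T), IsCompact Y → Y ≠ Set.univ →
    ∀ Z : Set (GraphEnd T), IsOpen Z → Z.Nonempty →
      ∃ g : G, endAct φ hφ g '' Y ⊆ Z

/-- A Cayley--Abels graph for G: connected, locally finite, vertex-transitive with compact
open vertex stabilisers. -/
def IsCayleyAbels [TopologicalSpace G] (T : SimpleGraph V) (φ : G →* Equiv.Perm V) : Prop :=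
  GraphAction T φ ∧ T.Connected ∧ (∀ v : V, (T.neighborSet v).Finite) ∧
  (∀ u v : V, ∃ g : G, φ g u = v) ∧
  (∀ v : V, IsCompact {g : G | φ g v = v} ∧ IsOpen {g : G | φ g v = v})

end Actions

/-- The half-tree associated to an arc (ordered pair of adjacent vertices). -/
def halfTree (T : SimpleGraph V) (p : V × V) : Set V :=
  {v : V | T.dist p.2 v < T.dist p.1 v}

/-- A geometric end: an end containing an infinite strictly descending sequence of
half-trees. -/
def IsGeometricEnd {T : SimpleGraph V} (ξ : GraphEnd T) : Prop :=
  ∃ f : ℕ → V × V, (∀ n, T.Adj (f n).1 (f n).2) ∧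
    (∀ n, halfTree T (f (n + 1)) ⊆ halfTree T (f n) ∧
      halfTree T (f (n + 1)) ≠ halfTree T (f n)) ∧
    (∀ n, halfTree T (f n) ∈ ξ.sets)

/-- A tree is leafless if every vertex has degree at least two. -/
def Leafless (T : SimpleGraph V) : Prop := ∀ v : V, (T.neighborSet v).Nontrivial

/-- The vertex set of a subtree: a nonempty convex set of vertices. -/
def IsSubtreeSet (T : SimpleGraph V) (S : Set V) : Prop :=
  S.Nonempty ∧ ∀ u ∈ S, ∀ v ∈ S, ∀ w : V, T.dist u w + T.dist w v = T.dist u v → w ∈ S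

section TopActions

variable {G : Type*} [Group G] [TopologicalSpace G] {φ : G →* Equiv.Perm V}

/-- The action preserves no proper subtree. -/
def NoInvariantProperSubtree (T : SimpleGraph V) (φ : G →* Equiv.Perm V) : Prop :=
  ∀ S : Set V, IsSubtreeSet T S → (∀ (g : G), ∀ v ∈ S, φ g v ∈ S) → S = Set.univ

/-- Arc stabilisers are compact open. -/
def CompactOpenArcStabs (T : SimpleGraph V) (φ : G →* Equiv.Perm V) : Prop :=
  ∀ p : V × V, T.Adj p.1 p.2 →
    IsCompact {g : G | φ g p.1 = p.1 ∧ φ g p.2 = p.2} ∧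
    IsOpen {g : G | φ g p.1 = p.1 ∧ φ g p.2 = p.2}

/-- G has finitely many orbits of arcs. -/
def FinManyArcOrbits (T : SimpleGraph V) (φ : G →* Equiv.Perm V) : Prop :=
  ∃ s : Set (V × V), s.Finite ∧
    ∀ p : V × V, T.Adj p.1 p.2 → ∃ q ∈ s, ∃ g : G, φ g q.1 = p.1 ∧ φ g q.2 = p.2

/-- The action on a leafless tree is arc-geometric: compact open arc stabilisers and
finitely many orbits of arcs. -/
def ArcGeometric (T : SimpleGraph V) (φ : G →* Equiv.Perm V) : Prop :=
  CompactOpenArcStabs T φ ∧ FinManyArcOrbits T φ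

end TopActions

/-- A scale group: a compactly generated t.d.l.c. group admitting a faithful
vertex-transitive action on a locally finite leafless tree with compact open vertex
stabilisers, fixing exactly one end. -/
def IsScaleGroup (G : Type u) [Group G] [TopologicalSpace G] : Prop :=
  ∃ (V : Type u) (T : SimpleGraph V) (φ : G →* Equiv.Perm V) (hφ : GraphAction T φ),
    T.IsTree ∧ Leafless T ∧ (∀ v : V, (T.neighborSet v).Finite) ∧
    Function.Injective φ ∧ (∀ u v : V, ∃ g : G, φ g u = v) ∧
    (∀ v : V, IsCompact {g : G | φ g v = v} ∧ IsOpen {g : G | φ g v = v}) ∧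
    ∃! ξ : GraphEnd T, IsGeometricEnd ξ ∧ ∀ g : G, endAct φ hφ g ξ = ξ

end Graphs

/-!
The set `K = UAU` is compact, symmetric and a union of cosets `kU`, so finitely many of them
cover it; symmetrising their representatives gives `B`. Conversely, `UB ⊆ BU` makes `⟨B⟩U` a
subgroup, and it contains `U` and `A ⊆ BU`. The graph joins `gU` and `hU` when `h⁻¹g ∈ K`: the
left action preserves it, the stabiliser of `gU` is the compact open `gUg⁻¹`, the neighbours of
`gU` lie among the finitely many `gbU`, and the elements `g` with `gU` in the component of `U`
form a subgroup containing `U ∪ A`, hence all of `G`.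
-/

namespace Subgroup

variable {G : Type*} [Group G] (U : Subgroup G) {K : Set G}

theorem coe_mul_mul_coe_idem (X : Set G) :
    (U : Set G) * ((U : Set G) * X * U) * U = (U : Set G) * X * U := by
  rw [← mul_assoc, ← mul_assoc, coe_mul_coe, mul_assoc, coe_mul_coe]

theorem mul_coe_eq_self (hK : (U : Set G) * K * U = K) : K * U = K := by
  rw [← hK, mul_assoc, coe_mul_coe]

theorem coe_mul_singleton_mul_coe_subset_iff (hK : (U : Set G) * K * U = K) (c : G) :
    (U : Set G) * {c} * U ⊆ K ↔ c ∈ K := by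
  refine ⟨fun h => by simpa using h (Set.mul_mem_mul (Set.mul_mem_mul U.one_mem rfl) U.one_mem),
    fun hc => ?_⟩
  rw [← hK]
  gcongr
  exact Set.singleton_subset_iff.2 hc

theorem exists_finite_subset_subset_mul [TopologicalSpace G] [ContinuousMul G]
    (hK : IsCompact K) (hU : IsOpen (U : Set G)) : ∃ t ⊆ K, t.Finite ∧ K ⊆ t * U := by
  obtain ⟨t, htK, ht, hcover⟩ := hK.elim_finite_subcover_image (fun g _ => hU.smul g)
    fun g hg => Set.mem_biUnion hg ⟨1, U.one_mem, mul_one g⟩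
  refine ⟨t, htK, ht, hcover.trans ?_⟩
  rintro _ ⟨_, ⟨g, rfl⟩, ⟨_, ⟨hg, rfl⟩, u, hu, rfl⟩⟩
  exact Set.mul_mem_mul hg hu

theorem exists_finite_symmetric_mul_eq [TopologicalSpace G] [ContinuousMul G]
    (hK : IsCompact K) (hU : IsOpen (U : Set G)) (hKU : (U : Set G) * K * U = K)
    (hKinv : K⁻¹ = K) : ∃ B : Set G, B.Finite ∧ B = B⁻¹ ∧ B * U = K ∧ (U : Set G) * B = K := by
  obtain ⟨t, htK, ht, hKt⟩ := U.exists_finite_subset_subset_mul hK hU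
  have hBsymm : t ∪ t⁻¹ = (t ∪ t⁻¹)⁻¹ := by rw [Set.union_inv, inv_inv, Set.union_comm]
  have hBU : (t ∪ t⁻¹) * U = K := by
    refine le_antisymm ?_ (hKt.trans (Set.mul_subset_mul_right Set.subset_union_left))
    calc (t ∪ t⁻¹) * U ⊆ K * U := by
          gcongr
          exact Set.union_subset htK (hKinv ▸ Set.inv_subset_inv.2 htK)
      _ = K := U.mul_coe_eq_self hKU
  refine ⟨t ∪ t⁻¹, ht.union ht.inv, hBsymm, hBU, ?_⟩
  calc (U : Set G) * (t ∪ t⁻¹) = ((t ∪ t⁻¹) * U)⁻¹ := by rw [mul_inv_rev, inv_coe_set, ← hBsymm]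
    _ = K := by rw [hBU, hKinv]

theorem coe_sup_eq_mul_of_mul_subset {H N : Subgroup G} (h : (N : Set G) * H ⊆ H * N) :
    ((H ⊔ N : Subgroup G) : Set G) = H * N := by
  let M : Subgroup G :=
    { carrier := H * N
      one_mem' := ⟨1, H.one_mem, 1, N.one_mem, one_mul 1⟩
      mul_mem' := fun {a b} ha hb => by
        have hMM : (H : Set G) * N * (H * N) ⊆ H * N := calc
          (H : Set G) * N * (H * N) = H * (N * H) * N := by simp only [mul_assoc]
          _ ⊆ H * (H * N) * N := by gcongr
          _ = H * N := by rw [← mul_assoc, coe_mul_coe, mul_assoc, coe_mul_coe]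
        exact hMM (Set.mul_mem_mul ha hb)
      inv_mem' := fun {a} ha => by
        have hM : ((H : Set G) * N)⁻¹ ⊆ H * N := by rwa [mul_inv_rev, inv_coe_set, inv_coe_set]
        exact hM (Set.inv_mem_inv.2 ha) }
  have hle : H ⊔ N ≤ M := sup_le (fun x hx => ⟨x, hx, 1, N.one_mem, mul_one x⟩)
    (fun x hx => ⟨1, H.one_mem, x, hx, one_mul x⟩)
  exact le_antisymm (fun x hx => hle hx)
    (mul_subset (SetLike.coe_subset_coe.2 le_sup_left) (SetLike.coe_subset_coe.2 le_sup_right))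

theorem coe_mul_closure_subset {B : Set G} (hB : B = B⁻¹) (hUB : (U : Set G) * B ⊆ B * U) :
    (U : Set G) * closure B ⊆ closure B * U := by
  have step : ∀ b ∈ B, ∀ y, (∀ u ∈ U, u * y ∈ (closure B : Set G) * U) →
      ∀ u ∈ U, u * (b * y) ∈ (closure B : Set G) * U := by
    intro b hb y ih u hu
    obtain ⟨b', hb', u', hu', hbu : b' * u' = u * b⟩ := hUB (Set.mul_mem_mul hu hb)
    obtain ⟨y', hy', u'', hu'', hyu : y' * u'' = u' * y⟩ := ih u' hu'
    refine ⟨b' * y', mul_mem (subset_closure hb') hy', u'', hu'', ?_⟩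
    calc b' * y' * u'' = b' * (u' * y) := by rw [mul_assoc, hyu]
      _ = u * (b * y) := by rw [← mul_assoc, hbu, mul_assoc]
  rintro _ ⟨u, hu, x, hx, rfl⟩
  induction hx using closure_induction_left generalizing u with
  | one => exact ⟨1, one_mem _, u, hu, by simp⟩
  | mul_left b hb y _ ih => exact step b hb y ih u hu
  | inv_mul_cancel b hb y _ ih =>
    exact step b⁻¹ (by rw [hB]; exact Set.inv_mem_inv.2 hb) y ih u hu

theorem closure_sup_eq_top_of_subset_mul {A B : Set G} (hgen : closure ((U : Set G) ∪ A) = ⊤)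
    (hAB : A ⊆ B * U) : closure B ⊔ U = ⊤ := by
  rw [eq_top_iff, ← hgen, closure_le]
  refine Set.union_subset (SetLike.coe_subset_coe.2 le_sup_right) (hAB.trans ?_)
  exact mul_subset (subset_closure.trans (SetLike.coe_subset_coe.2 le_sup_left))
    (SetLike.coe_subset_coe.2 le_sup_right)

end Subgroup

section Graph

variable {V G : Type*} [Group G] {T : SimpleGraph V} {φ : G →* Equiv.Perm V}

def GraphAction.reachableSubgroup (hφ : GraphAction T φ) (v : V) : Subgroup G where
  carrier := {g | T.Reachable v (φ g v)}
  one_mem' := by simp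
  mul_mem' {a b} ha hb := ha.trans <| by
    rw [map_mul, Equiv.Perm.mul_apply]
    exact (hφ.iso a).reachable_iff.2 hb
  inv_mem' {a} ha := by
    have h : T.Reachable (φ a⁻¹ v) (φ a⁻¹ (φ a v)) := (hφ.iso a⁻¹).reachable_iff.2 ha
    rw [← Equiv.Perm.mul_apply, ← map_mul, inv_mul_cancel, map_one, Equiv.Perm.one_apply] at h
    exact h.symm

theorem GraphAction.mem_reachableSubgroup (hφ : GraphAction T φ) {v : V} {g : G} :
    g ∈ hφ.reachableSubgroup v ↔ T.Reachable v (φ g v) :=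
  Iff.rfl

end Graph

section CosetGraph

variable {G : Type*} [Group G] (U : Subgroup G) (K : Set G)

/-- Built with `fromRel`, which needs no well-definedness; the choice of representatives becomes
irrelevant once `UKU = K` and `K⁻¹ = K`. -/
def cosetGraph : SimpleGraph (G ⧸ U) :=
  SimpleGraph.fromRel fun x y => ∃ g h : G, (g : G ⧸ U) = x ∧ (h : G ⧸ U) = y ∧ h⁻¹ * g ∈ K

variable {U K}

theorem inv_mul_mem_of_mk_eq_mk (hKU : (U : Set G) * K * U = K) {g g' h h' : G}
    (hg : (g' : G ⧸ U) = g) (hh : (h' : G ⧸ U) = h) (hK : h'⁻¹ * g' ∈ K) : h⁻¹ * g ∈ K := by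
  have hu : g'⁻¹ * g ∈ U := QuotientGroup.eq.mp hg
  have hv : h⁻¹ * h' ∈ U := QuotientGroup.eq.mp hh.symm
  rw [← hKU]
  convert Set.mul_mem_mul (Set.mul_mem_mul hv hK) hu using 1
  group

theorem cosetGraph_adj_mk (hKU : (U : Set G) * K * U = K) (hKinv : K⁻¹ = K) (g h : G) :
    (cosetGraph U K).Adj g h ↔ (g : G ⧸ U) ≠ h ∧ h⁻¹ * g ∈ K := by
  rw [cosetGraph, SimpleGraph.fromRel_adj]
  refine and_congr_right fun _ => ⟨?_, fun hgh => Or.inl ⟨g, h, rfl, rfl, hgh⟩⟩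
  rintro (⟨g', h', hg, hh, hK⟩ | ⟨h', g', hh, hg, hK⟩)
  · exact inv_mul_mem_of_mk_eq_mk hKU hg hh hK
  · refine inv_mul_mem_of_mk_eq_mk hKU hg hh ?_
    rwa [← hKinv, Set.mem_inv, mul_inv_rev, inv_inv]

theorem graphAction_cosetGraph : GraphAction (cosetGraph U K) (MulAction.toPermHom G (G ⧸ U)) := by
  rintro a x y ⟨hne, hr⟩
  refine ⟨fun h => hne (smul_left_cancel a h), ?_⟩
  rcases hr with ⟨g, h, rfl, rfl, hK⟩ | ⟨g, h, rfl, rfl, hK⟩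
  · exact Or.inl ⟨a * g, a * h, rfl, rfl, by simpa [mul_assoc] using hK⟩
  · exact Or.inr ⟨a * g, a * h, rfl, rfl, by simpa [mul_assoc] using hK⟩

theorem cosetGraph_connected (hK : Subgroup.closure ((U : Set G) ∪ K) = ⊤) :
    (cosetGraph U K).Connected := by
  have hreach : ∀ x ∈ (U : Set G) ∪ K, (cosetGraph U K).Reachable ((1 : G) : G ⧸ U) x := by
    rintro x hx
    by_cases h1x : ((1 : G) : G ⧸ U) = x
    · rw [h1x]
    refine SimpleGraph.Adj.reachable ⟨h1x, Or.inr ⟨x, 1, rfl, rfl, ?_⟩⟩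
    rcases hx with hx | hx
    · exact absurd (QuotientGroup.eq.2 (by simpa using hx)) h1x
    · simpa using hx
  have hle : Subgroup.closure ((U : Set G) ∪ K) ≤
      graphAction_cosetGraph.reachableSubgroup ((1 : G) : G ⧸ U) :=
    (Subgroup.closure_le _).2 fun x hx => by
      simpa [GraphAction.mem_reachableSubgroup] using hreach x hx
  refine (SimpleGraph.connected_iff_exists_forall_reachable _).2 ⟨((1 : G) : G ⧸ U), fun w => ?_⟩
  induction w using QuotientGroup.induction_on with | H g => ?_
  simpa [GraphAction.mem_reachableSubgroup] using hle (hK ▸ Subgroup.mem_top g)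

theorem setOf_smul_mk_eq_conjAct_smul (g : G) :
    {k : G | k • (g : G ⧸ U) = g} = ConjAct.toConjAct g • (U : Set G) := by
  ext k
  rw [Set.mem_ofPred_eq, Set.mem_smul_set_iff_inv_smul_mem, MulAction.Quotient.smul_mk, eq_comm,
    QuotientGroup.eq, ConjAct.smul_def]
  simp [mul_assoc]

variable [TopologicalSpace G] [ContinuousMul G]

theorem cosetGraph_neighborSet_finite (hU : IsOpen (U : Set G)) (hKc : IsCompact K)
    (hKU : (U : Set G) * K * U = K) (hKinv : K⁻¹ = K) (x : G ⧸ U) :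
    ((cosetGraph U K).neighborSet x).Finite := by
  obtain ⟨t, -, ht, hKt⟩ := U.exists_finite_subset_subset_mul hKc hU
  induction x using QuotientGroup.induction_on with | H g => ?_
  refine (ht.image fun b => ((g * b : G) : G ⧸ U)).subset fun y hy => ?_
  induction y using QuotientGroup.induction_on with | H h => ?_
  have hhg : h⁻¹ * g ∈ K := ((cosetGraph_adj_mk hKU hKinv g h).1 hy).2
  have hgh : g⁻¹ * h ∈ K := by rwa [← hKinv, Set.mem_inv, mul_inv_rev, inv_inv]
  obtain ⟨b, hb, u, hu, hbu : b * u = g⁻¹ * h⟩ := hKt hgh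
  refine ⟨b, hb, QuotientGroup.eq.2 ?_⟩
  rwa [mul_inv_rev, mul_assoc, ← hbu, inv_mul_cancel_left]

theorem isCayleyAbels_cosetGraph (hUc : IsCompact (U : Set G)) (hUo : IsOpen (U : Set G))
    (hKc : IsCompact K) (hKU : (U : Set G) * K * U = K) (hKinv : K⁻¹ = K)
    (hK : Subgroup.closure ((U : Set G) ∪ K) = ⊤) :
    IsCayleyAbels (cosetGraph U K) (MulAction.toPermHom G (G ⧸ U)) := by
  refine ⟨graphAction_cosetGraph, cosetGraph_connected hK,
    cosetGraph_neighborSet_finite hUo hKc hKU hKinv, MulAction.exists_smul_eq G, fun v => ?_⟩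
  induction v using QuotientGroup.induction_on with | H g => ?_
  exact setOf_smul_mk_eq_conjAct_smul g ▸ ⟨hUc.smul _, hUo.smul _⟩

end CosetGraph

theorem cayley_abels_construction_general {G : Type*} [Group G] [TopologicalSpace G]
    [IsTopologicalGroup G]
    (U : Subgroup G) (hUc : IsCompact (U : Set G)) (hUo : IsOpen (U : Set G))
    (A : Set G) (hAc : IsCompact A) (hAsymm : A = A⁻¹)
    (hgen : Subgroup.closure ((U : Set G) ∪ A) = ⊤) :
    (∃ B : Set G, B.Finite ∧ B = B⁻¹ ∧
      B * (U : Set G) = (U : Set G) * B ∧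
      (U : Set G) * B = (U : Set G) * B * (U : Set G) ∧
      (U : Set G) * B * (U : Set G) = (U : Set G) * A * (U : Set G)) ∧
    (∀ B : Set G, B.Finite → B = B⁻¹ →
      B * (U : Set G) = (U : Set G) * B →
      (U : Set G) * B = (U : Set G) * B * (U : Set G) →
      (U : Set G) * B * (U : Set G) = (U : Set G) * A * (U : Set G) →
      ((Subgroup.closure B : Set G) * (U : Set G) = Set.univ ∧
        ∃ Γ : SimpleGraph (G ⧸ U),
          (∀ g h : G, Γ.Adj (g : G ⧸ U) (h : G ⧸ U) ↔
            (g : G ⧸ U) ≠ (h : G ⧸ U) ∧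
            (U : Set G) * {h⁻¹ * g} * (U : Set G) ⊆ (U : Set G) * B * (U : Set G)) ∧
          IsCayleyAbels Γ (MulAction.toPermHom G (G ⧸ U)))) := by
  set K := (U : Set G) * A * U
  have hKc : IsCompact K := (hUc.mul hAc).mul hUc
  have hKU : (U : Set G) * K * U = K := U.coe_mul_mul_coe_idem A
  have hKinv : K⁻¹ = K := by rw [mul_inv_rev, mul_inv_rev, inv_coe_set, ← hAsymm, ← mul_assoc]
  have hAK : A ⊆ K := fun a ha => ⟨1 * a, Set.mul_mem_mul U.one_mem ha, 1, U.one_mem, by simp⟩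
  refine ⟨?_, fun B _ hBsymm hBU hUB hUBU => ?_⟩
  · obtain ⟨B, hB, hBsymm, hBU, hUB⟩ := U.exists_finite_symmetric_mul_eq hKc hUo hKU hKinv
    have hUBU : (U : Set G) * B * U = K := by rw [hUB, U.mul_coe_eq_self hKU]
    exact ⟨B, hB, hBsymm, hBU.trans hUB.symm, hUB.trans hUBU.symm, hUBU⟩
  have hAB : A ⊆ B * U := by rw [hBU, hUB, hUBU]; exact hAK
  have hsup : Subgroup.closure B ⊔ U = ⊤ := U.closure_sup_eq_top_of_subset_mul hgen hAB
  refine ⟨?_, cosetGraph U K, fun g h => ?_, isCayleyAbels_cosetGraph hUc hUo hKc hKU hKinv ?_⟩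
  · rw [← Subgroup.coe_sup_eq_mul_of_mul_subset (U.coe_mul_closure_subset hBsymm hBU.symm.subset),
      hsup, Subgroup.coe_top]
  · rw [cosetGraph_adj_mk hKU hKinv, hUBU, U.coe_mul_singleton_mul_coe_subset_iff hKU]
  · exact eq_top_iff.2 (hgen ▸ Subgroup.closure_mono (Set.union_subset_union_right _ hAK))

/-- Lemma 2.3: construction of Cayley--Abels graphs. Given a compact open subgroup U and
a compact symmetric set A with G = ⟨U, A⟩, there is a finite symmetric set B with
BU = UB = UBU = UAU, and for any such B one has G = ⟨B⟩U and the graph on G/U with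
gU ~ hU iff gU ≠ hU and Uh⁻¹gU ⊆ UBU is a Cayley--Abels graph for G. -/
theorem cayley_abels_construction {G : Type*} [Group G] [TopologicalSpace G]
    [IsTopologicalGroup G] [LocallyCompactSpace G] [TotallyDisconnectedSpace G] [T2Space G]
    (U : Subgroup G) (hUc : IsCompact (U : Set G)) (hUo : IsOpen (U : Set G))
    (A : Set G) (hAc : IsCompact A) (hAsymm : A = A⁻¹)
    (hgen : Subgroup.closure ((U : Set G) ∪ A) = ⊤) :
    (∃ B : Set G, B.Finite ∧ B = B⁻¹ ∧
      B * (U : Set G) = (U : Set G) * B ∧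
      (U : Set G) * B = (U : Set G) * B * (U : Set G) ∧
      (U : Set G) * B * (U : Set G) = (U : Set G) * A * (U : Set G)) ∧
    (∀ B : Set G, B.Finite → B = B⁻¹ →
      B * (U : Set G) = (U : Set G) * B →
      (U : Set G) * B = (U : Set G) * B * (U : Set G) →
      (U : Set G) * B * (U : Set G) = (U : Set G) * A * (U : Set G) →
      ((Subgroup.closure B : Set G) * (U : Set G) = Set.univ ∧
        ∃ Γ : SimpleGraph (G ⧸ U),
          (∀ g h : G, Γ.Adj (g : G ⧸ U) (h : G ⧸ U) ↔
            (g : G ⧸ U) ≠ (h : G ⧸ U) ∧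
            (U : Set G) * {h⁻¹ * g} * (U : Set G) ⊆ (U : Set G) * B * (U : Set G)) ∧
          IsCayleyAbels Γ (MulAction.toPermHom G (G ⧸ U)))) :=
  cayley_abels_construction_general U hUc hUo A hAc hAsymm hgen
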